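/- For the strong subadditivity inequality S(AB) + S(BC) ≥ S(B) + S(ABC) (so L = R = 2 with unit coefficients), the map f : {0,1}^2 → {0,1}^2 defined by f(0,0) = (0,0), f(1,0) = (0,1), f(0,1) = (0,1), f(1,1) = (1,1) is a Hamming-norm contraction (with unit weights) and maps the occurrence vectors of A, B, C, O on the LHS to those on the RHS. Hence strong subadditivity holds for the discrete entropy of every graph model. -/
import Mathlib


noncomputable def cutWeight {V : Type} [Fintype V] [DecidableEq V]
    (w : V → V → ℝ) (W : Finset V) : ℝ :=
  ∑ u ∈ W, ∑ v ∈ Wᶜ, w u v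

noncomputable def discreteEntropy {V : Type} [Fintype V] [DecidableEq V] {n : ℕ}
    (w : V → V → ℝ) (boundary : V → Option (Fin (n + 1))) (I : Finset (Fin n)) : ℝ :=
  sInf { c : ℝ | ∃ W : Finset V,
    (∀ v j, boundary v = some j → (v ∈ W ↔ ∃ i ∈ I, Fin.castSucc i = j)) ∧
    c = cutWeight w W }

def wHamming {m : ℕ} (α : Fin m → ℝ) (x y : Fin m → Bool) : ℝ :=
  ∑ l, α l * (if x l = y l then 0 else 1)

/-- The contraction map for strong subadditivity:
`f(0,0) = (0,0)`, `f(1,0) = (0,1)`, `f(0,1) = (0,1)`, `f(1,1) = (1,1)`. -/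
def ssaMap (x : Fin 2 → Bool) : Fin 2 → Bool :=
  fun r => if r = 0 then x 0 && x 1 else x 0 || x 1

lemma cutWeight_eq {V : Type} [Fintype V] [DecidableEq V]
    (w : V → V → ℝ) (W : Finset V) :
    cutWeight w W = ∑ u, ∑ v, (if u ∈ W ∧ v ∉ W then w u v else 0) := by
  unfold cutWeight
  have hWc : Wᶜ = Finset.univ.filter (· ∉ W) := by ext v; simp
  conv_lhs => rw [hWc]; rw [show (W : Finset V) = Finset.univ.filter (· ∈ W) from by simp]
  rw [Finset.sum_filter]
  refine Finset.sum_congr rfl fun u _ => ?_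
  rw [Finset.sum_filter]
  by_cases hu : u ∈ W <;> simp [hu]

lemma cutWeight_nonneg {V : Type} [Fintype V] [DecidableEq V]
    {w : V → V → ℝ} (hw : ∀ u v, 0 ≤ w u v) (W : Finset V) :
    0 ≤ cutWeight w W :=
  Finset.sum_nonneg fun u _ => Finset.sum_nonneg fun v _ => hw u v

lemma cutWeight_submodular {V : Type} [Fintype V] [DecidableEq V]
    {w : V → V → ℝ} (hw : ∀ u v, 0 ≤ w u v) (A B : Finset V) :
    cutWeight w (A ∩ B) + cutWeight w (A ∪ B) ≤ cutWeight w A + cutWeight w B := by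
  simp only [cutWeight_eq, ← Finset.sum_add_distrib]
  refine Finset.sum_le_sum fun u _ => Finset.sum_le_sum fun v _ => ?_
  simp only [Finset.mem_inter, Finset.mem_union]
  by_cases ha : u ∈ A <;> by_cases hb : u ∈ B <;>
    by_cases hc : v ∈ A <;> by_cases hd : v ∈ B <;>
    simp [ha, hb, hc, hd, hw u v]

/-- The map `ssaMap` is a unit-weight Hamming contraction, maps the occurrence
vectors `x^A = (1,0)`, `x^B = (1,1)`, `x^C = (0,1)`, `x^O = (0,0)` of the LHS
terms `(AB, BC)` of strong subadditivity to the occurrence vectors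
`y^A = (0,1)`, `y^B = (1,1)`, `y^C = (0,1)`, `y^O = (0,0)` of the RHS terms
`(B, ABC)`; hence strong subadditivity
`S(AB) + S(BC) ≥ S(B) + S(ABC)` holds for the discrete entropy of every
graph model (with parties `A = 0`, `B = 1`, `C = 2` and purifier `O`). -/
theorem ssa_contraction_and_validity :
    (∀ x x' : Fin 2 → Bool,
      wHamming (fun _ => (1 : ℝ)) (ssaMap x) (ssaMap x') ≤
        wHamming (fun _ => (1 : ℝ)) x x') ∧
    ssaMap ![true, false] = ![false, true] ∧
    ssaMap ![true, true] = ![true, true] ∧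
    ssaMap ![false, true] = ![false, true] ∧
    ssaMap ![false, false] = ![false, false] ∧
    (∀ (V : Type) [Fintype V] [DecidableEq V]
      (w : V → V → ℝ), (∀ u v, 0 ≤ w u v) → (∀ u v, w u v = w v u) →
      ∀ boundary : V → Option (Fin 4),
        discreteEntropy w boundary ({1} : Finset (Fin 3)) +
            discreteEntropy w boundary ({0, 1, 2} : Finset (Fin 3)) ≤
          discreteEntropy w boundary ({0, 1} : Finset (Fin 3)) +
            discreteEntropy w boundary ({1, 2} : Finset (Fin 3))) := by
  refine ⟨?_, by decide, by decide, by decide, by decide, ?_⟩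
  · intro x x'
    have helper : ∀ a b a' b' : Bool,
        (if (a && b) = (a' && b') then (0:ℝ) else 1) +
          (if (a || b) = (a' || b') then (0:ℝ) else 1) ≤
        (if a = a' then (0:ℝ) else 1) + (if b = b' then (0:ℝ) else 1) := by
      intro a b a' b'
      cases a <;> cases b <;> cases a' <;> cases b' <;> norm_num
    simp only [wHamming, ssaMap, Fin.sum_univ_two, one_mul, if_pos rfl,
      if_neg (show (1 : Fin 2) ≠ 0 by decide)]
    exact helper (x 0) (x 1) (x' 0) (x' 1)
  · intro V _ _ w hw _ boundary
    set Cond : Finset (Fin 3) → Finset V → Prop := fun I W =>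
      ∀ v j, boundary v = some j → (v ∈ W ↔ ∃ i ∈ I, Fin.castSucc i = j) with hCond
    set S : Finset (Fin 3) → Set ℝ := fun I =>
      { c : ℝ | ∃ W : Finset V, Cond I W ∧ c = cutWeight w W } with hS
    have hSE : ∀ I, discreteEntropy w boundary I = sInf (S I) := fun I => rfl
    have hne : ∀ I, (S I).Nonempty := by
      intro I
      refine ⟨_, Finset.univ.filter (fun v => ∃ i ∈ I, boundary v = some i.castSucc), ?_, rfl⟩
      intro v j hj
      simp only [Finset.mem_filter, Finset.mem_univ, true_and, hj, Option.some.injEq]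
      constructor
      · rintro ⟨i, hi, h⟩; exact ⟨i, hi, h.symm⟩
      · rintro ⟨i, hi, h⟩; exact ⟨i, hi, h.symm⟩
    have hbdd : ∀ I, BddBelow (S I) := by
      rintro I
      exact ⟨0, by rintro c ⟨W, _, rfl⟩; exact cutWeight_nonneg hw W⟩
    have hj1 : ∀ j : Fin 4,
        ((∃ i ∈ ({0,1} : Finset (Fin 3)), Fin.castSucc i = j) ∧
          (∃ i ∈ ({1,2} : Finset (Fin 3)), Fin.castSucc i = j)) ↔
        (∃ i ∈ ({1} : Finset (Fin 3)), Fin.castSucc i = j) := by decide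
    have hj2 : ∀ j : Fin 4,
        ((∃ i ∈ ({0,1} : Finset (Fin 3)), Fin.castSucc i = j) ∨
          (∃ i ∈ ({1,2} : Finset (Fin 3)), Fin.castSucc i = j)) ↔
        (∃ i ∈ ({0,1,2} : Finset (Fin 3)), Fin.castSucc i = j) := by decide
    have key : ∀ c ∈ S {0,1}, ∀ d ∈ S {1,2},
        sInf (S {1}) + sInf (S {0,1,2}) ≤ c + d := by
      rintro c ⟨W1, h1, rfl⟩ d ⟨W2, h2, rfl⟩
      have hi : cutWeight w (W1 ∩ W2) ∈ S {1} := by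
        refine ⟨W1 ∩ W2, fun v j hj => ?_, rfl⟩
        rw [Finset.mem_inter, h1 v j hj, h2 v j hj]
        exact hj1 j
      have hu : cutWeight w (W1 ∪ W2) ∈ S {0,1,2} := by
        refine ⟨W1 ∪ W2, fun v j hj => ?_, rfl⟩
        rw [Finset.mem_union, h1 v j hj, h2 v j hj]
        exact hj2 j
      have hsub := cutWeight_submodular hw W1 W2
      have a1 := csInf_le (hbdd {1}) hi
      have a2 := csInf_le (hbdd {0,1,2}) hu
      linarith
    have h1 : ∀ c ∈ S {0,1},
        sInf (S {1}) + sInf (S {0,1,2}) - c ≤ sInf (S {1,2}) := by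
      intro c hc
      exact le_csInf (hne _) fun d hd => by linarith [key c hc d hd]
    have h2 : sInf (S {1}) + sInf (S {0,1,2}) - sInf (S {1,2}) ≤ sInf (S {0,1}) :=
      le_csInf (hne _) fun c hc => by linarith [h1 c hc]
    rw [hSE, hSE, hSE, hSE]
    linarith
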